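/- arXiv:1406.0794 — 2 statements merged into one kernel-verified Lean document; each statement's English description precedes it below -/
import Mathlib

section
/- Let α : ℝ² → ℝ be convex and superlinear with e > min α, and assume that at each boundary point c of A(e) = {α ≤ e} the set of outer normal directions is a single ray ρ(c). Then the map c ↦ ρ(c) from the boundary α⁻¹(e) to the space of rays in ℝ² is continuous and surjective. -/
/-!
Continuity: unit outer normals are limits of unit outer normals, so the graph of `ρ` is closed
in a compact target, and uniqueness of the normal forces every cluster value of `ρ` at `c` to
be `ρ c`. Surjectivity: superlinearity makes `A(e)` compact, so a linear functional `⟪·, v⟫`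
attains its maximum on `A(e)` at some `c`; then `v` is an outer normal at `c`, and `c` lies on
`α⁻¹(e)` because a nonzero linear functional has no local maximum.
-/

open Filter Topology Set

section ClosedGraph

variable {X Y : Type*} [TopologicalSpace X] [TopologicalSpace Y]

theorem MapClusterPt.prodMk_of_tendsto {ι : Type*} {l : Filter ι} {g : ι → X} {f : ι → Y}
    {x : X} {y : Y} (hg : Tendsto g l (𝓝 x)) (hf : MapClusterPt y l f) :
    MapClusterPt (x, y) l fun i => (g i, f i) := by
  rw [((𝓝 x).basis_sets.prod_nhds (𝓝 y).basis_sets).mapClusterPt_iff_frequently]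
  rintro ⟨U, V⟩ ⟨hU, hV⟩
  exact ((mapClusterPt_iff_frequently.1 hf V hV).and_eventually (hg hU)).mono
    fun _ h => ⟨h.2, h.1⟩

/-- A closed graph theorem with compact target: `G` plays the role of the graph of `f` over `s`. -/
theorem continuousOn_of_isClosed_of_unique {f : X → Y} {s : Set X} {K : Set Y} {G : Set (X × Y)}
    (hG : IsClosed G) (hK : IsCompact K) (hfK : MapsTo f s K) (hfG : ∀ x ∈ s, (x, f x) ∈ G)
    (huniq : ∀ x ∈ s, ∀ y ∈ K, (x, y) ∈ G → y = f x) : ContinuousOn f s := by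
  intro x hx
  refine hK.tendsto_nhds_of_unique_mapClusterPt (eventually_mem_nhdsWithin.mono hfK)
    fun y hy hxy => huniq x hx y hy ?_
  exact hG.mem_of_mapClusterPt (hxy.prodMk_of_tendsto (g := id) (tendsto_id'.2 nhdsWithin_le_nhds))
    (eventually_mem_nhdsWithin.mono hfG)

end ClosedGraph

theorem isCompact_preimage_Iic_of_tendsto_cocompact {X β : Type*} [TopologicalSpace X]
    [LinearOrder β] [TopologicalSpace β] [ClosedIicTopology β] [NoMaxOrder β] {f : X → β}
    (hf : Continuous f) (hlim : Tendsto f (cocompact X) atTop) (e : β) :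
    IsCompact (f ⁻¹' Iic e) := by
  obtain ⟨K, hK, hKe⟩ := mem_cocompact.1 (hlim.eventually (eventually_gt_atTop e))
  refine hK.of_isClosed_subset (isClosed_Iic.preimage hf) fun x hx => ?_
  by_contra hxK
  exact (hKe hxK).not_ge hx

theorem tendsto_cocompact_atTop_of_div_norm {E : Type*} [NormedAddCommGroup E] [ProperSpace E]
    {f : E → ℝ} (h : Tendsto (fun x => f x / ‖x‖) (cocompact E) atTop) :
    Tendsto f (cocompact E) atTop := by
  refine (h.atTop_mul_atTop₀ tendsto_norm_cocompact_atTop).congr' ?_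
  filter_upwards [tendsto_norm_cocompact_atTop.eventually (eventually_gt_atTop 0)] with x hx
  exact div_mul_cancel₀ _ hx.ne'

theorem ContinuousLinearMap.notMem_interior_of_isMaxOn {E : Type*} [NormedAddCommGroup E]
    [NormedSpace ℝ E] {φ : E →L[ℝ] ℝ} (hφ : φ ≠ 0) {K : Set E} {c : E} (hmax : IsMaxOn φ K c) :
    c ∉ interior K := fun hc =>
  hφ ((hmax.isLocalMax (mem_interior_iff_mem_nhds.1 hc)).hasFDerivAt_eq_zero φ.hasFDerivAt)

section OuterNormal

variable {E : Type*} [NormedAddCommGroup E] [InnerProductSpace ℝ E]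

/-- Neither `v ≠ 0` nor `c ∈ K` is part of the definition. -/
def IsOuterNormal (K : Set E) (c v : E) : Prop :=
  ∀ c' ∈ K, inner ℝ (c' - c) v ≤ 0

theorem isClosed_setOf_isOuterNormal (K : Set E) :
    IsClosed {p : E × E | IsOuterNormal K p.1 p.2} := by
  simp only [IsOuterNormal, ofPred_forall]
  exact isClosed_biInter fun c' _ =>
    isClosed_le ((continuous_const.sub continuous_fst).inner continuous_snd) continuous_const

theorem IsMaxOn.isOuterNormal {K : Set E} {c v : E} (hmax : IsMaxOn (inner ℝ v) K c) :
    IsOuterNormal K c v := fun c' hc' => by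
  rw [real_inner_comm, inner_sub_right, sub_nonpos]
  exact hmax hc'

theorem IsMaxOn.mem_frontier_of_inner {K : Set E} {c v : E} (hv : v ≠ 0) (hc : c ∈ K)
    (hmax : IsMaxOn (inner ℝ v) K c) : c ∈ frontier K := by
  refine ⟨subset_closure hc, (innerSL ℝ v).notMem_interior_of_isMaxOn ?_ hmax⟩
  rwa [Ne, ← norm_eq_zero, innerSL_apply_norm, norm_eq_zero]

end OuterNormal

theorem outer_normal_ray_map_continuous_surjective_general
    (α : EuclideanSpace ℝ (Fin 2) → ℝ)
    (hcont : Continuous α)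
    (hsuper : Tendsto (fun c : EuclideanSpace ℝ (Fin 2) => α c / ‖c‖) (cocompact _) atTop)
    (e : ℝ) (hmin : ∃ cm : EuclideanSpace ℝ (Fin 2), α cm < e)
    (ρ : EuclideanSpace ℝ (Fin 2) → EuclideanSpace ℝ (Fin 2))
    (hρunit : ∀ c ∈ α ⁻¹' {e}, ‖ρ c‖ = 1)
    (hρnormal : ∀ c ∈ α ⁻¹' {e}, ∀ c' : EuclideanSpace ℝ (Fin 2), α c' ≤ e →
      (inner ℝ (c' - c) (ρ c) : ℝ) ≤ 0)
    (hρunique : ∀ c ∈ α ⁻¹' {e}, ∀ v : EuclideanSpace ℝ (Fin 2), v ≠ 0 →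
      (∀ c' : EuclideanSpace ℝ (Fin 2), α c' ≤ e → (inner ℝ (c' - c) v : ℝ) ≤ 0) →
      ∃ t : ℝ, 0 < t ∧ v = t • ρ c) :
    ContinuousOn ρ (α ⁻¹' {e}) ∧
    ∀ v : EuclideanSpace ℝ (Fin 2), ‖v‖ = 1 → ∃ c ∈ α ⁻¹' {e}, ρ c = v := by
  have hunique : ∀ c ∈ α ⁻¹' {e}, ∀ v ∈ Metric.sphere 0 1,
      IsOuterNormal (α ⁻¹' Iic e) c v → v = ρ c := by
    intro c hc v hv hnormal
    obtain ⟨t, ht, rfl⟩ := hρunique c hc v (ne_zero_of_mem_unit_sphere ⟨v, hv⟩) hnormal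
    exact (SameRay.sameRay_pos_smul_left _ ht).eq_of_norm_eq
      (by rw [mem_sphere_zero_iff_norm.1 hv, hρunit c hc])
  refine ⟨continuousOn_of_isClosed_of_unique (isClosed_setOf_isOuterNormal _)
    (isCompact_sphere 0 1) (fun c hc => by simp [hρunit c hc]) hρnormal hunique, fun v hv => ?_⟩
  have hv' : v ∈ Metric.sphere 0 1 := mem_sphere_zero_iff_norm.2 hv
  obtain ⟨cm, hcm⟩ := hmin
  have hA : IsCompact (α ⁻¹' Iic e) :=
    isCompact_preimage_Iic_of_tendsto_cocompact hcont (tendsto_cocompact_atTop_of_div_norm hsuper) e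
  obtain ⟨c, hcA, hmax⟩ := hA.exists_isMaxOn ⟨cm, hcm.le⟩ (innerSL ℝ v).continuous.continuousOn
  have hcS : c ∈ α ⁻¹' {e} := frontier_le_subset_eq hcont continuous_const
    (hmax.mem_frontier_of_inner (ne_zero_of_mem_unit_sphere ⟨v, hv'⟩) hcA)
  exact ⟨c, hcS, (hunique c hcS v hv' hmax.isOuterNormal).symm⟩

/-- if at each point c of the boundary α⁻¹(e) of the sublevel set {α ≤ e}
the outer normals form a single ray, directed by the unit vector ρ(c), then
c ↦ ρ(c) is continuous on α⁻¹(e) and onto the set of rays (unit vectors). -/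
theorem outer_normal_ray_map_continuous_surjective
    (α : EuclideanSpace ℝ (Fin 2) → ℝ) (hconv : ConvexOn ℝ Set.univ α)
    (hcont : Continuous α)
    (hsuper : Tendsto (fun c : EuclideanSpace ℝ (Fin 2) => α c / ‖c‖) (cocompact _) atTop)
    (e : ℝ) (hmin : ∃ cm : EuclideanSpace ℝ (Fin 2), α cm < e)
    (ρ : EuclideanSpace ℝ (Fin 2) → EuclideanSpace ℝ (Fin 2))
    (hρunit : ∀ c ∈ α ⁻¹' {e}, ‖ρ c‖ = 1)
    (hρnormal : ∀ c ∈ α ⁻¹' {e}, ∀ c' : EuclideanSpace ℝ (Fin 2), α c' ≤ e →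
      (inner ℝ (c' - c) (ρ c) : ℝ) ≤ 0)
    (hρunique : ∀ c ∈ α ⁻¹' {e}, ∀ v : EuclideanSpace ℝ (Fin 2), v ≠ 0 →
      (∀ c' : EuclideanSpace ℝ (Fin 2), α c' ≤ e → (inner ℝ (c' - c) v : ℝ) ≤ 0) →
      ∃ t : ℝ, 0 < t ∧ v = t • ρ c) :
    ContinuousOn ρ (α ⁻¹' {e}) ∧
    ∀ v : EuclideanSpace ℝ (Fin 2), ‖v‖ = 1 → ∃ c ∈ α ⁻¹' {e}, ρ c = v :=
  outer_normal_ray_map_continuous_surjective_general α hcont hsuper e hmin ρ hρunit hρnormal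
    hρunique
end

section
/- Let Σ ≅ ℝ/ℤ, ψ a homeomorphism of a compact subset of Σ, τ, m₀, ε₀ as in the paper, and for each m ≥ m₀ let x_m be a point whose ψ^τ-orbit O_m = {x_m, ψ^τ x_m, …, ψ^{(m-1)τ} x_m} has minimal period m and is (m, 2ε₀)-separated for ψ^τ as in Lemma 'orbit'. Assume additionally the separation conditions (7) of the paper between different orbits. Then the union ⋃_{k=m}^{2m-1} O_k is (4m, ε₀)-separated for ψ^τ, and has cardinality ≥ m²; in abstract form: if for every pair of points x ∈ O_k, y ∈ O_l with m ≤ k < l < 2m there exists 0 ≤ j < 4m with d(ψ^{jτ} x, ψ^{jτ} y) ≥ ε₀, and each O_k has cardinality k ≥ m with the O_k pairwise disjoint, then S_{4mτ}^{ψ}(ε₀) ≥ m², and hence limsup_n log S_n^ψ(ε₀)/log n ≥ 2. -/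
open Filter Topology

/-- The dynamical metric d_n^f(x,y) = max_{0 ≤ k ≤ n-1} d(f^k x, f^k y). -/
noncomputable def dynDist {X : Type*} [MetricSpace X] (f : X → X) (n : ℕ) (x y : X) : ℝ :=
  (((Finset.range n).sup fun k => nndist (f^[k] x) (f^[k] y) : NNReal) : ℝ)

/-- G_n^f(ε): minimal number of d_n^f-balls of radius ε covering X. -/
noncomputable def coverNum {X : Type*} [MetricSpace X] (f : X → X) (n : ℕ) (ε : ℝ) : ℕ :=
  sInf {N | ∃ s : Finset X, s.card = N ∧ ∀ x : X, ∃ c ∈ s, dynDist f n x c < ε}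

/-- E is (n,ε)-separated for f. -/
def IsDynSep {X : Type*} [MetricSpace X] (f : X → X) (n : ℕ) (ε : ℝ) (E : Set X) : Prop :=
  ∀ x ∈ E, ∀ y ∈ E, x ≠ y → ε ≤ dynDist f n x y

/-- S_n^f(ε): maximal cardinality of an (n,ε)-separated set. -/
noncomputable def sepNum {X : Type*} [MetricSpace X] (f : X → X) (n : ℕ) (ε : ℝ) : ℕ :=
  sSup {N | ∃ E : Finset X, E.card = N ∧ IsDynSep f n ε ↑E}

/-- Polynomial entropy via covering numbers. -/
noncomputable def hpol {X : Type*} [MetricSpace X] (f : X → X) : EReal :=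
  limsup (fun ε : ℝ =>
      limsup (fun n : ℕ => ((Real.log (coverNum f n ε) / Real.log n : ℝ) : EReal)) atTop)
    (𝓝[>] (0 : ℝ))

/-- Polynomial entropy via separated sets. -/
noncomputable def hpolSep {X : Type*} [MetricSpace X] (f : X → X) : EReal :=
  limsup (fun ε : ℝ =>
      limsup (fun n : ℕ => ((Real.log (sepNum f n ε) / Real.log n : ℝ) : EReal)) atTop)
    (𝓝[>] (0 : ℝ))

/-!
The union of the orbits `O k`, `m ≤ k < 2m`, consists of `m` disjoint sets with at least `m`
points each, so it has at least `m²` points, and by hypothesis it is `(4mτ, ε₀)`-separated;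
compactness bounds the size of separated sets, so `S_{4mτ}(ε₀) ≥ m²`. Along `n = 4τm` this gives
`log S_n(ε₀) / log n ≥ 2 log m / (log (4τ) + log m) → 2`, and since `S_n(ε)` only grows as `ε`
decreases the same bound holds for every `ε < ε₀`, hence for `h_pol`.
-/

section DynDist

variable {X : Type*} [MetricSpace X] {f : X → X} {n : ℕ}

@[simp]
lemma dynDist_self (x : X) : dynDist f n x x = 0 := by
  simp [dynDist]

lemma dynDist_comm (x y : X) : dynDist f n x y = dynDist f n y x := by
  simp [dynDist, nndist_comm]

lemma dynDist_triangle (x y z : X) :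
    dynDist f n x z ≤ dynDist f n x y + dynDist f n y z := by
  rw [dynDist, dynDist, dynDist, ← NNReal.coe_add, NNReal.coe_le_coe]
  refine Finset.sup_le fun k hk => (nndist_triangle _ (f^[k] y) _).trans ?_
  exact add_le_add (Finset.le_sup (f := fun k => nndist (f^[k] x) (f^[k] y)) hk)
    (Finset.le_sup (f := fun k => nndist (f^[k] y) (f^[k] z)) hk)

lemma dist_iterate_le_dynDist {j : ℕ} (hj : j < n) (x y : X) :
    dist (f^[j] x) (f^[j] y) ≤ dynDist f n x y := by
  rw [dist_nndist, dynDist, NNReal.coe_le_coe]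
  exact Finset.le_sup (f := fun k => nndist (f^[k] x) (f^[k] y)) (Finset.mem_range.2 hj)

lemma continuous_dynDist (hf : Continuous f) (c : X) : Continuous (dynDist f n c) :=
  NNReal.continuous_coe.comp <| Continuous.finset_sup_apply fun k _ =>
    continuous_const.nndist (hf.iterate k)

lemma isDynSep_of_exists_iterate {ε : ℝ} {E : Set X}
    (h : ∀ x ∈ E, ∀ y ∈ E, x ≠ y → ∃ j < n, ε ≤ dist (f^[j] x) (f^[j] y)) :
    IsDynSep f n ε E := fun x hx y hy hxy =>
  let ⟨_, hj, hdist⟩ := h x hx y hy hxy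
  hdist.trans (dist_iterate_le_dynDist hj x y)

end DynDist

section SepNum

variable {X : Type*} [MetricSpace X] [CompactSpace X] {f : X → X} {n : ℕ} {ε : ℝ}

/- Points of an `(n, ε)`-separated set lie in distinct members of a finite cover by dynamical
balls of radius `ε / 2`. -/
lemma bddAbove_card_isDynSep (hf : Continuous f) (hε : 0 < ε) :
    BddAbove {N | ∃ E : Finset X, E.card = N ∧ IsDynSep f n ε ↑E} := by
  obtain ⟨t, ht⟩ := isCompact_univ.elim_finite_subcover
    (fun c : X => dynDist f n c ⁻¹' Set.Iio (ε / 2))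
    (fun c => isOpen_Iio.preimage (continuous_dynDist hf c))
    (fun x _ => Set.mem_iUnion.2 ⟨x, by simp [hε]⟩)
  have hcov : ∀ x : X, ∃ c ∈ t, dynDist f n c x < ε / 2 := by
    simpa using fun x => ht (Set.mem_univ x)
  choose center hcenter_mem hcenter_lt using hcov
  refine ⟨t.card, ?_⟩
  rintro _ ⟨E, rfl, hE⟩
  refine Finset.card_le_card_of_injOn center (fun x _ => hcenter_mem x) fun x hx y hy hxy => ?_
  by_contra hne
  have hsep := hE x hx y hy hne
  have hx' := hcenter_lt x
  have hy' := hcenter_lt y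
  rw [dynDist_comm] at hx'
  rw [← hxy] at hy'
  linarith [dynDist_triangle (f := f) (n := n) x (center x) y]

lemma card_le_sepNum (hf : Continuous f) (hε : 0 < ε) {E : Finset X}
    (hE : IsDynSep f n ε ↑E) : E.card ≤ sepNum f n ε :=
  le_csSup (bddAbove_card_isDynSep hf hε) ⟨E, rfl, hE⟩

lemma sepNum_anti (hf : Continuous f) {ε' : ℝ} (hε : 0 < ε) (h : ε ≤ ε') :
    sepNum f n ε' ≤ sepNum f n ε := by
  refine csSup_le_csSup (bddAbove_card_isDynSep hf hε) ⟨0, ∅, rfl, by simp [IsDynSep]⟩ ?_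
  rintro _ ⟨E, rfl, hE⟩
  exact ⟨E, rfl, fun x hx y hy hxy => h.trans (hE x hx y hy hxy)⟩

end SepNum

lemma sq_le_card_biUnion_Ico {α : Type*} [DecidableEq α] {O : ℕ → Finset α} {m : ℕ}
    (hcard : ∀ k ∈ Finset.Ico m (2 * m), m ≤ (O k).card)
    (hdisj : ∀ k l, m ≤ k → k < l → l < 2 * m → Disjoint (O k) (O l)) :
    m ^ 2 ≤ ((Finset.Ico m (2 * m)).biUnion O).card := by
  have hpairwise : (Finset.Ico m (2 * m) : Set ℕ).PairwiseDisjoint O := by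
    intro k hk l hl hkl
    simp only [Finset.coe_Ico, Set.mem_Ico] at hk hl
    rcases hkl.lt_or_gt with h | h
    · exact hdisj k l hk.1 h hl.2
    · exact (hdisj l k hl.1 h hk.2).symm
  calc m ^ 2 = (Finset.Ico m (2 * m)).card • m := by simp [sq, two_mul]
    _ ≤ ∑ k ∈ Finset.Ico m (2 * m), (O k).card := Finset.card_nsmul_le_sum _ _ _ hcard
    _ = ((Finset.Ico m (2 * m)).biUnion O).card := (Finset.card_biUnion hpairwise).symm

lemma tendsto_mul_log_div_log_const_mul (a : ℝ) {c : ℕ} (hc : 0 < c) :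
    Tendsto (fun m : ℕ => a * Real.log m / Real.log (c * m : ℕ)) atTop (𝓝 a) := by
  have hlog : Tendsto (fun m : ℕ => Real.log m) atTop atTop :=
    Real.tendsto_log_atTop.comp tendsto_natCast_atTop_atTop
  have hden : Tendsto (fun m : ℕ => Real.log c / Real.log m + 1) atTop (𝓝 1) := by
    simpa using (tendsto_const_nhds.div_atTop hlog).add_const 1
  have hlim : Tendsto (fun m : ℕ => a / (Real.log c / Real.log m + 1)) atTop (𝓝 a) := by
    simpa [Pi.div_def] using tendsto_const_nhds.div hden one_ne_zero
  refine hlim.congr' ?_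
  filter_upwards [eventually_gt_atTop 1] with m hm
  have hlog_pos : 0 < Real.log m := Real.log_pos (by exact_mod_cast hm)
  rw [Nat.cast_mul, Real.log_mul (by positivity) (by positivity), div_add_one hlog_pos.ne',
    div_div_eq_mul_div]

lemma le_limsup_log_div_log {u : ℕ → ℕ} {a c : ℕ} (hc : 0 < c)
    (h : ∀ᶠ m in atTop, m ^ a ≤ u (c * m)) :
    (a : EReal) ≤ limsup (fun n : ℕ => ((Real.log (u n) / Real.log n : ℝ) : EReal)) atTop := by
  set w : ℕ → EReal := fun n => ((Real.log (u n) / Real.log n : ℝ) : EReal)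
  have hle : ∀ᶠ m : ℕ in atTop,
      ((a * Real.log m / Real.log (c * m : ℕ) : ℝ) : EReal) ≤ w (c * m) := by
    filter_upwards [h, eventually_gt_atTop 0] with m hm hm_pos
    refine EReal.coe_le_coe_iff.2 (div_le_div_of_nonneg_right ?_ (Real.log_natCast_nonneg _))
    rw [← Real.log_pow]
    exact Real.log_le_log (by positivity) (by exact_mod_cast hm)
  have hmul : Tendsto (c * ·) atTop atTop := tendsto_id.const_mul_atTop' hc
  calc (a : EReal)
      = liminf (fun m : ℕ => ((a * Real.log m / Real.log (c * m : ℕ) : ℝ) : EReal)) atTop :=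
        (EReal.tendsto_coe.2 (tendsto_mul_log_div_log_const_mul a hc)).liminf_eq.symm
    _ ≤ liminf (fun m => w (c * m)) atTop := liminf_le_liminf hle
    _ ≤ limsup (fun m => w (c * m)) atTop := liminf_le_limsup
    _ = limsup w (map (c * ·) atTop) := limsup_comp w _ atTop
    _ ≤ limsup w atTop := limsup_le_limsup_of_le hmul

lemma limsup_log_sepNum_le_hpolSep {X : Type*} [MetricSpace X] [CompactSpace X] {f : X → X}
    (hf : Continuous f) {ε : ℝ} (hε : 0 < ε) :
    limsup (fun n : ℕ => ((Real.log (sepNum f n ε) / Real.log n : ℝ) : EReal)) atTop ≤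
      hpolSep f := by
  refine le_limsup_of_frequently_le (Eventually.frequently ?_)
  filter_upwards [Ioo_mem_nhdsGT hε] with δ hδ
  refine limsup_le_limsup (Eventually.of_forall fun n => EReal.coe_le_coe_iff.2 ?_)
  refine div_le_div_of_nonneg_right ?_ (Real.log_natCast_nonneg n)
  rcases (sepNum f n ε).eq_zero_or_pos with hzero | hpos
  · simp [hzero, Real.log_natCast_nonneg]
  · exact Real.log_le_log (by exact_mod_cast hpos) (by exact_mod_cast sepNum_anti hf hδ.1 hδ.2.le)

/-- if for every m ≥ m₀ the sets O_k, m ≤ k < 2m, are pairwise disjoint,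
each O_k has cardinality k, and every pair of distinct points of their union is
(4mτ, ε₀)-separated for ψ, then S_{4mτ}^ψ(ε₀) ≥ m², the limsup of log S_n^ψ(ε₀)/log n is
at least 2, and h_pol(ψ) ≥ 2. -/
theorem union_of_orbits_separated {X : Type*} [MetricSpace X] [CompactSpace X]
    [DecidableEq X] (ψ : X ≃ₜ X) (τ : ℕ) (hτ : 1 ≤ τ) (ε₀ : ℝ) (hε₀ : 0 < ε₀) (m₀ : ℕ)
    (O : ℕ → Finset X) (hcard : ∀ m ≥ m₀, (O m).card = m)
    (hdisj : ∀ m ≥ m₀, ∀ k l, m ≤ k → k < l → l < 2 * m → Disjoint (O k) (O l))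
    (hsep : ∀ m ≥ m₀, ∀ x ∈ (Finset.Ico m (2 * m)).biUnion O,
      ∀ y ∈ (Finset.Ico m (2 * m)).biUnion O, x ≠ y →
        ∃ j < 4 * m * τ, ε₀ ≤ dist ((⇑ψ)^[j] x) ((⇑ψ)^[j] y)) :
    (∀ m ≥ m₀, m ^ 2 ≤ sepNum (⇑ψ) (4 * m * τ) ε₀) ∧
    (2 : EReal) ≤
      limsup (fun n : ℕ => ((Real.log (sepNum (⇑ψ) n ε₀) / Real.log n : ℝ) : EReal)) atTop ∧
    (2 : EReal) ≤ hpolSep (⇑ψ) := by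
  have hsq : ∀ m ≥ m₀, m ^ 2 ≤ sepNum (⇑ψ) (4 * m * τ) ε₀ := fun m hm => calc
    m ^ 2 ≤ ((Finset.Ico m (2 * m)).biUnion O).card :=
      sq_le_card_biUnion_Ico (fun k hk => by
        rw [Finset.mem_Ico] at hk
        rw [hcard k (hm.trans hk.1)]
        exact hk.1) (hdisj m hm)
    _ ≤ sepNum (⇑ψ) (4 * m * τ) ε₀ :=
      card_le_sepNum ψ.continuous hε₀ (isDynSep_of_exists_iterate (hsep m hm))
  have hlimsup : (2 : EReal) ≤
      limsup (fun n : ℕ => ((Real.log (sepNum (⇑ψ) n ε₀) / Real.log n : ℝ) : EReal)) atTop := by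
    refine le_limsup_log_div_log (c := 4 * τ) (by omega) ?_
    filter_upwards [eventually_ge_atTop m₀] with m hm
    simpa only [mul_right_comm] using hsq m hm
  exact ⟨hsq, hlimsup, hlimsup.trans (limsup_log_sepNum_le_hpolSep ψ.continuous hε₀)⟩
end
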